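/- arXiv:1103.4453 — 2 statements merged into one kernel-verified Lean document; each statement's English description precedes it below -/
import Mathlib

section
/- For a random walk $(S_n)$ on $\mathbb{Z}^d$ with i.i.d. increments, the range $R_n = \#\{S_0,\dots,S_{n-1}\}$ satisfies the subadditivity property: for all natural numbers $a, b$, $\mathbb{P}(R_n \ge a + b) \le \mathbb{P}(R_n \ge a)\,\mathbb{P}(R_n \ge b)$. -/
/-!
If the range reaches `a + b` points by time `n`, let `k` be the first time it holds `a` points;
since the range grows by at most one point per step, it holds exactly `a` points then. The walk
after time `k` is a translate of the walk driven by the steps `X (k + 1), X (k + 2), …`, so it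
must visit at least `b` points in its remaining `n - k` steps. The first event depends only on
the steps before time `k` and the second only on the later ones, so they are independent; by
the i.i.d. assumption the second has the probability of `{R (n - k) ≥ b} ⊆ {R n ≥ b}`. Summing
over the disjoint events indexed by `k` gives the bound.
-/

open MeasureTheory ProbabilityTheory Finset Function

section WalkRange

variable {E : Type*} [AddCommGroup E] [DecidableEq E]

def walkRange (x : ℕ → E) (n : ℕ) : ℕ :=
  ((range n).image fun j => ∑ i ∈ range j, x i).card

variable (x : ℕ → E)

@[simp]
lemma walkRange_zero : walkRange x 0 = 0 := by
  simp [walkRange]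

lemma walkRange_mono : Monotone (walkRange x) := fun _ _ h =>
  card_le_card (image_subset_image (range_subset_range.2 h))

lemma walkRange_succ_le (n : ℕ) : walkRange x (n + 1) ≤ walkRange x n + 1 := by
  rw [walkRange, range_add_one, image_insert]
  exact card_insert_le _ _

lemma walkRange_add_le (k m : ℕ) :
    walkRange x (k + m) ≤ walkRange x k + walkRange (fun i => x (k + i)) m := by
  have himage : (range (k + m)).image (fun j => ∑ i ∈ range j, x i) =
      (range k).image (fun j => ∑ i ∈ range j, x i) ∪
        ((range m).image fun j => ∑ i ∈ range j, x (k + i)).image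
          ((∑ i ∈ range k, x i) + ·) := by
    simp only [range_add, image_union, map_eq_image, image_image]
    congr 1
    exact image_congr fun j _ => by simp [sum_range_add]
  calc walkRange x (k + m) ≤ walkRange x k + (((range m).image fun j =>
          ∑ i ∈ range j, x (k + i)).image ((∑ i ∈ range k, x i) + ·)).card := by
        rw [walkRange, himage]; exact card_union_le _ _
    _ ≤ walkRange x k + walkRange (fun i => x (k + i)) m := by
        gcongr; exact card_image_le

lemma dependsOn_walkRange (n : ℕ) :
    DependsOn (fun x : ℕ → E => walkRange x n) (range n : Set ℕ) := by
  intro x y hxy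
  refine congrArg card (image_congr fun j hj => sum_congr rfl fun i hi => hxy i ?_)
  simp only [coe_range, Set.mem_Iio, mem_range] at hj hi ⊢
  omega

lemma dependsOn_walkRange_shift (k m : ℕ) :
    DependsOn (fun x : ℕ → E => walkRange (fun i => x (k + i)) m) (Ico k (k + m) : Set ℕ) :=
  fun x y hxy => dependsOn_walkRange m fun i hi => hxy (k + i) (by simp at hi ⊢; omega)

def rangeReachesAt (a k : ℕ) : Set (ℕ → E) :=
  {x | walkRange x k = a ∧ ∀ j < k, walkRange x j < a}

lemma pairwise_disjoint_rangeReachesAt (a : ℕ) :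
    Pairwise (Disjoint on rangeReachesAt (E := E) a) := by
  intro k l hkl
  refine Set.disjoint_left.2 fun x hk hl => ?_
  rcases hkl.lt_or_gt with h | h
  · exact (hl.2 k h).ne hk.1
  · exact (hk.2 l h).ne hl.1

lemma exists_mem_rangeReachesAt {a n : ℕ} (h : a ≤ walkRange x n) :
    ∃ k ≤ n, x ∈ rangeReachesAt a k := by
  classical
  have hex : ∃ k, a ≤ walkRange x k := ⟨n, h⟩
  have hmin : ∀ j < Nat.find hex, walkRange x j < a := fun j hj => not_le.1 (Nat.find_min hex hj)
  refine ⟨Nat.find hex, Nat.find_min' hex h, le_antisymm ?_ (Nat.find_spec hex), hmin⟩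
  rcases hk : Nat.find hex with _ | j
  · simp
  · have := hmin j (by omega)
    have := walkRange_succ_le x j
    omega

lemma exists_mem_rangeReachesAt_le_walkRange_shift {a b n : ℕ} (h : a + b ≤ walkRange x n) :
    ∃ k ≤ n, x ∈ rangeReachesAt a k ∧ b ≤ walkRange (fun i => x (k + i)) (n - k) := by
  obtain ⟨k, hkn, hk⟩ := exists_mem_rangeReachesAt x (le_of_add_le_left h)
  have := walkRange_add_le x k (n - k)
  rw [Nat.add_sub_cancel' hkn, hk.1] at this
  exact ⟨k, hkn, hk, by omega⟩

lemma dependsOn_rangeReachesAt (a k : ℕ) :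
    DependsOn (fun x : ℕ → E => x ∈ rangeReachesAt a k) (range k : Set ℕ) := by
  intro x y hxy
  have hj : ∀ j ≤ k, walkRange x j = walkRange y j := fun j hj =>
    dependsOn_walkRange j fun i hi => hxy i (by simp at hi ⊢; omega)
  simp only [rangeReachesAt, Set.mem_ofPred_eq, hj k le_rfl]
  exact propext (and_congr_right' (forall₂_congr fun j hjk => by rw [hj j hjk.le]))

end WalkRange

section DependsOn

variable {ι E α : Type*} {f : (ι → E) → α} {s : Finset ι}

lemma DependsOn.preimage_eq_restrict_preimage (hf : DependsOn f s) (t : Set α) :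
    f ⁻¹' t = s.restrict ⁻¹' (s.restrict '' (f ⁻¹' t)) := by
  refine (Set.subset_preimage_image _ _).antisymm ?_
  rintro x ⟨y, hy, hyx⟩
  rwa [Set.mem_preimage, ← hf fun i hi => congrFun hyx ⟨i, hi⟩]

variable [MeasurableSpace E] [Countable E] [MeasurableSingletonClass E] [MeasurableSpace α]

lemma DependsOn.measurable_comap_restrict (hf : DependsOn f s) :
    Measurable[MeasurableSpace.comap s.restrict inferInstance] f := fun t _ =>
  ⟨_, MeasurableSet.of_discrete, (hf.preimage_eq_restrict_preimage t).symm⟩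

lemma DependsOn.measurable (hf : DependsOn f s) : Measurable f :=
  hf.measurable_comap_restrict.mono s.measurable_restrict.comap_le le_rfl

lemma DependsOn.comap_comp_le {Ω : Type*} (Φ : Ω → ι → E) (hf : DependsOn f s) :
    MeasurableSpace.comap (f ∘ Φ) inferInstance ≤
      MeasurableSpace.comap (fun ω (i : s) => Φ ω i) inferInstance := by
  rw [← MeasurableSpace.comap_comp]
  exact (MeasurableSpace.comap_mono hf.measurable_comap_restrict.comap_le).trans_eq
    MeasurableSpace.comap_comp

lemma ProbabilityTheory.iIndepFun.indepFun_comp_of_dependsOn {Ω β : Type*} [MeasurableSpace Ω]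
    {μ : Measure Ω} [MeasurableSpace β] {Y : ι → Ω → E} (hY : ∀ i, Measurable (Y i))
    (hindep : iIndepFun Y μ) {g : (ι → E) → β} {t : Finset ι} (hst : Disjoint s t)
    (hf : DependsOn f s) (hg : DependsOn g t) :
    IndepFun (fun ω => f (Y · ω)) (fun ω => g (Y · ω)) μ :=
  indep_of_indep_of_le (hindep.indepFun_finset s t hst hY)
    (hf.comap_comp_le fun ω i => Y i ω) (hg.comap_comp_le fun ω i => Y i ω)

end DependsOn

lemma ProbabilityTheory.iIndepFun.identDistrib_precomp {Ω ι E : Type*} [MeasurableSpace Ω]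
    {μ : Measure Ω} [MeasurableSpace E] {Y : ι → Ω → E}
    (hY : ∀ i, Measurable (Y i)) (hindep : iIndepFun Y μ)
    (hident : ∀ i j, IdentDistrib (Y i) (Y j) μ μ) {g : ι → ι} (hg : Injective g) :
    IdentDistrib (fun ω i => Y (g i) ω) (fun ω i => Y i ω) μ μ where
  aemeasurable_fst := (measurable_pi_lambda _ fun i => hY (g i)).aemeasurable
  aemeasurable_snd := (measurable_pi_lambda _ hY).aemeasurable
  map_eq := by
    rw [(hindep.precomp hg).map_fun_eq_infinitePi_map fun i => hY (g i),
      hindep.map_fun_eq_infinitePi_map hY]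
    exact congrArg Measure.infinitePi (funext fun i => (hident (g i) i).map_eq)

section Walk

variable {Ω E : Type*} [MeasurableSpace Ω] {μ : Measure Ω} [AddCommGroup E] [DecidableEq E]
  [MeasurableSpace E] [Countable E] [MeasurableSingletonClass E] {Y : ℕ → Ω → E}

lemma ProbabilityTheory.iIndepFun.identDistrib_walkRange_shift (hY : ∀ i, Measurable (Y i))
    (hindep : iIndepFun Y μ) (hident : ∀ i j, IdentDistrib (Y i) (Y j) μ μ) (k m : ℕ) :
    IdentDistrib (fun ω => walkRange (fun i => Y (k + i) ω) m) (fun ω => walkRange (Y · ω) m)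
      μ μ :=
  (hindep.identDistrib_precomp hY hident (add_right_injective k)).comp
    (dependsOn_walkRange m).measurable

theorem ProbabilityTheory.iIndepFun.measure_add_le_walkRange_le_mul (hY : ∀ i, Measurable (Y i))
    (hindep : iIndepFun Y μ) (hident : ∀ i j, IdentDistrib (Y i) (Y j) μ μ) (n a b : ℕ) :
    μ {ω | a + b ≤ walkRange (Y · ω) n} ≤
      μ {ω | a ≤ walkRange (Y · ω) n} * μ {ω | b ≤ walkRange (Y · ω) n} := by
  let A k := (fun ω i => Y i ω) ⁻¹' rangeReachesAt a k
  let B k := {ω | b ≤ walkRange (fun i => Y (k + i) ω) (n - k)}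
  have hA_meas k : MeasurableSet (A k) :=
    measurable_pi_lambda _ hY (measurableSet_setOfPred.2 (dependsOn_rangeReachesAt a k).measurable)
  have hA_disj : Pairwise (Disjoint on A) := fun k l hkl =>
    (pairwise_disjoint_rangeReachesAt a hkl).preimage _
  have hA_sub : ⋃ k ∈ range (n + 1), A k ⊆ {ω | a ≤ walkRange (Y · ω) n} :=
    Set.iUnion₂_subset fun k hk ω hω => hω.1 ▸ walkRange_mono _ (by simp at hk; omega)
  have hcover :
      {ω | a + b ≤ walkRange (Y · ω) n} ⊆ ⋃ k ∈ range (n + 1), A k ∩ B k := by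
    intro ω hω
    obtain ⟨k, hkn, hk⟩ := exists_mem_rangeReachesAt_le_walkRange_shift _ hω
    exact Set.mem_biUnion (mem_range.2 (Nat.lt_succ_of_le hkn)) hk
  have hAB k : μ (A k ∩ B k) = μ (A k) * μ (B k) := by
    have hdisj : Disjoint (range k) (Ico k (k + (n - k))) := by
      rw [range_eq_Ico]; exact Ico_disjoint_Ico_consecutive 0 k _
    exact (hindep.indepFun_comp_of_dependsOn hY hdisj (dependsOn_rangeReachesAt a k)
      (dependsOn_walkRange_shift k (n - k))).measure_inter_preimage_eq_mul
      {p | p} {m | b ≤ m} MeasurableSet.of_discrete MeasurableSet.of_discrete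
  have hB k : μ (B k) ≤ μ {ω | b ≤ walkRange (Y · ω) n} :=
    ((hindep.identDistrib_walkRange_shift hY hident k (n - k)).measure_mem_eq
      (s := {m | b ≤ m}) MeasurableSet.of_discrete).trans_le
      (measure_mono fun ω hω => hω.trans (walkRange_mono _ (Nat.sub_le n k)))
  calc μ {ω | a + b ≤ walkRange (Y · ω) n}
      ≤ ∑ k ∈ range (n + 1), μ (A k ∩ B k) :=
        (measure_mono hcover).trans (measure_biUnion_finset_le _ _)
    _ ≤ ∑ k ∈ range (n + 1), μ (A k) * μ {ω | b ≤ walkRange (Y · ω) n} := by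
      refine sum_le_sum fun k _ => ?_
      rw [hAB]
      exact mul_le_mul_right (hB k) _
    _ = μ (⋃ k ∈ range (n + 1), A k) * μ {ω | b ≤ walkRange (Y · ω) n} := by
      rw [← sum_mul, measure_biUnion_finset (hA_disj.set_pairwise _) fun k _ => hA_meas k]
    _ ≤ μ {ω | a ≤ walkRange (Y · ω) n} * μ {ω | b ≤ walkRange (Y · ω) n} :=
      mul_le_mul_left (measure_mono hA_sub) _

end Walk

theorem range_subadditive_general
    {Ω : Type*} [MeasurableSpace Ω] (μ : Measure Ω)
    (d : ℕ) (X : ℕ → Ω → (Fin d → ℤ))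
    (hmeas : ∀ k, Measurable (X k))
    (hindep : iIndepFun X μ)
    (hident : ∀ i j, IdentDistrib (X i) (X j) μ μ)
    (S : ℕ → Ω → (Fin d → ℤ))
    (hS : ∀ n ω, S n ω = ∑ k ∈ Finset.range n, X (k + 1) ω)
    (R : ℕ → Ω → ℕ)
    (hR : ∀ n ω, R n ω = ((Finset.range n).image (fun k => S k ω)).card)
    (n : ℕ) (a b : ℕ) :
    μ {ω | a + b ≤ R n ω} ≤ μ {ω | a ≤ R n ω} * μ {ω | b ≤ R n ω} := by
  have hR_walk ω : R n ω = walkRange (fun i => X (i + 1) ω) n := by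
    simp only [hR, hS, walkRange]
  simp only [hR_walk]
  exact (hindep.precomp (add_left_injective 1)).measure_add_le_walkRange_le_mul
    (fun i => hmeas (i + 1)) (fun i j => hident _ _) n a b

/-- Subadditivity of the range of a random walk with i.i.d. increments:
`P(R_n ≥ a + b) ≤ P(R_n ≥ a) * P(R_n ≥ b)`. -/
theorem range_subadditive
    {Ω : Type*} [MeasurableSpace Ω] (μ : Measure Ω) [IsProbabilityMeasure μ]
    (d : ℕ) (X : ℕ → Ω → (Fin d → ℤ))
    (hmeas : ∀ k, Measurable (X k))
    (hindep : iIndepFun X μ)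
    (hident : ∀ i j, IdentDistrib (X i) (X j) μ μ)
    (S : ℕ → Ω → (Fin d → ℤ))
    (hS : ∀ n ω, S n ω = ∑ k ∈ Finset.range n, X (k + 1) ω)
    (R : ℕ → Ω → ℕ)
    (hR : ∀ n ω, R n ω = ((Finset.range n).image (fun k => S k ω)).card)
    (n : ℕ) (a b : ℕ) :
    μ {ω | a + b ≤ R n ω} ≤ μ {ω | a ≤ R n ω} * μ {ω | b ≤ R n ω} :=
  range_subadditive_general μ d X hmeas hindep hident S hS R hR n a b
end

section
/- Let $(S_n)$ be a random walk on $\mathbb{Z}^d$ with i.i.d. increments and local times $N_n(x)$. For every $x \in \mathbb{Z}^d$ and $n \ge 1$, $N_n(S_k)$ has the same distribution as $N_{k+1}(0) + N'_{n-k}(0) - 1$, where $N'$ is the local time process of an independent copy of the walk. Consequently $\mathbb{E}[\exp(c N_n(S_k)/\log n)] \le \mathbb{E}[\exp(c N_n(0)/\log n)]^2$ for every $c > 0$ and $0 \le k \le n-1$. -/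
/-!
Write `L_m(ρ)` for the number of times `j < m` at which the walk with increments `ρ` is at `0`,
and `Φ(ρ) = L_{k+1}(ρ) + L_{n-k}(ρ(k + ·)) - 1`. Applied to the increments
`X_k, …, X_1, X_{k+1}, X_{k+2}, …` (the walk read backwards from time `k`, then forwards), `Φ`
gives `N_n(S_k)`; applied to `X_1, …, X_k, X'_1, X'_2, …` it gives
`N_{k+1}(0) + N'_{n-k}(0) - 1`. Both sequences are i.i.d. with the common law, so the two
random variables have the same law. For the moment bound, `N_{k+1}(0) + N'_{n-k}(0) - 1` is at
most `N_n(0) + N'_n(0)`, a sum of two independent copies of `N_n(0)`.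
-/

open MeasureTheory ProbabilityTheory Finset

section LocalTime

variable {E : Type*} [AddCommGroup E]

theorem sum_range_reflect_eq_sub (ξ : ℕ → E) {j k : ℕ} (hj : j ≤ k) :
    ∑ t ∈ range j, ξ (k - 1 - t) = ∑ t ∈ range k, ξ t - ∑ t ∈ range (k - j), ξ t := by
  obtain ⟨i, rfl⟩ := Nat.exists_eq_add_of_le hj
  rw [add_comm j i, Nat.add_sub_cancel, sum_range_add, add_sub_cancel_left,
    ← sum_range_reflect]
  refine sum_congr rfl fun t ht => ?_
  rw [mem_range] at ht
  congr 1
  omega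

variable [DecidableEq E]

def localTimeZero (m : ℕ) (ξ : ℕ → E) : ℕ :=
  #{j ∈ range m | ∑ t ∈ range j, ξ t = 0}

theorem dependsOn_localTimeZero (m : ℕ) :
    DependsOn (localTimeZero (E := E) m) (Set.Iio (m - 1)) := by
  intro ξ η h
  refine congrArg card (filter_congr fun j hj => ?_)
  rw [sum_congr rfl fun t ht => h t ?_]
  simp only [mem_range, Set.mem_Iio] at hj ht ⊢
  omega

theorem localTimeZero_le (m : ℕ) (ξ : ℕ → E) : localTimeZero m ξ ≤ m :=
  (card_filter_le _ _).trans (card_range m).le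

theorem localTimeZero_mono (ξ : ℕ → E) {m m' : ℕ} (h : m ≤ m') :
    localTimeZero m ξ ≤ localTimeZero m' ξ :=
  card_le_card (filter_subset_filter _ (range_subset_range.2 h))

theorem localTimeZero_succ_le (ξ : ℕ → E) (m : ℕ) :
    localTimeZero (m + 1) ξ ≤ localTimeZero m ξ + 1 := by
  unfold localTimeZero
  rw [range_add_one, filter_insert]
  split_ifs
  · exact card_insert_le _ _
  · exact Nat.le_succ _

theorem localTimeZero_add_localTimeZero_sub_one_le (ξ ξ' : ℕ → E) {k n : ℕ} (hk : k ≤ n) :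
    localTimeZero (k + 1) ξ + localTimeZero (n - k) ξ' - 1 ≤
      localTimeZero n ξ + localTimeZero n ξ' := by
  have := localTimeZero_mono ξ (Nat.add_le_add_right hk 1)
  have := localTimeZero_succ_le ξ n
  have := localTimeZero_mono ξ' (Nat.sub_le n k)
  omega

/-- Read backwards, resp. forwards, from time `k` the walk is again a walk started at `0`;
the two counts both include the time `k` itself. -/
theorem localTimeZero_reflect_add_localTimeZero_shift (ξ : ℕ → E) {k n : ℕ} (hk : k ≤ n) :
    localTimeZero (k + 1) (fun t => ξ (k - 1 - t)) + localTimeZero (n - k) (fun t => ξ (k + t)) =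
      #{j ∈ range n | ∑ t ∈ range j, ξ t = ∑ t ∈ range k, ξ t} + 1 := by
  set P : ℕ → ℕ := fun j => if ∑ t ∈ range j, ξ t = ∑ t ∈ range k, ξ t then 1 else 0
  have hback : localTimeZero (k + 1) (fun t => ξ (k - 1 - t)) = ∑ j ∈ range k, P j + 1 := by
    rw [localTimeZero, card_filter, ← sum_range_reflect, sum_range_succ]
    simp only [Nat.add_sub_cancel, Nat.sub_self, range_zero, sum_empty, if_pos]
    refine congrArg (· + 1) (sum_congr rfl fun j hj => ?_)
    rw [sum_range_reflect_eq_sub ξ (Nat.sub_le k j), Nat.sub_sub_self (mem_range.1 hj).le]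
    simp only [P, sub_eq_zero, eq_comm]
  have hfwd : localTimeZero (n - k) (fun t => ξ (k + t)) = ∑ j ∈ Ico k n, P j := by
    rw [localTimeZero, card_filter, sum_Ico_eq_sum_range]
    refine sum_congr rfl fun j _ => ?_
    simp only [P, sum_range_add, add_eq_left]
  rw [hback, hfwd, add_right_comm, sum_range_add_sum_Ico _ hk, card_filter]

def localTimeSplit (k n : ℕ) (ρ : ℕ → E) : ℕ :=
  localTimeZero (k + 1) ρ + localTimeZero (n - k) (fun t => ρ (k + t)) - 1

theorem dependsOn_localTimeSplit {k n : ℕ} (hk : k ≤ n) :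
    DependsOn (localTimeSplit (E := E) k n) (Set.Iio n) := by
  intro ξ η h
  rw [localTimeSplit, localTimeSplit, dependsOn_localTimeZero (k + 1) fun t ht => h t ?_,
    dependsOn_localTimeZero (n - k) fun t ht => h (k + t) ?_]
  all_goals simp only [Set.mem_Iio] at ht ⊢; omega

theorem localTimeSplit_reflect (ξ : ℕ → E) {k n : ℕ} (hk : k ≤ n) :
    localTimeSplit k n (fun t => ξ (if t < k then k - 1 - t else t)) =
      #{j ∈ range n | ∑ t ∈ range j, ξ t = ∑ t ∈ range k, ξ t} := by
  have hback : (localTimeZero (k + 1) fun t => ξ (if t < k then k - 1 - t else t)) =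
      localTimeZero (k + 1) fun t => ξ (k - 1 - t) :=
    dependsOn_localTimeZero _ fun t ht => by
      simp only [Set.mem_Iio, Nat.add_sub_cancel] at ht
      rw [if_pos ht]
  simp only [localTimeSplit, hback, add_lt_iff_neg_left, Nat.not_lt_zero, if_false]
  rw [localTimeZero_reflect_add_localTimeZero_shift ξ hk, Nat.add_sub_cancel]

theorem localTimeSplit_append (ξ ξ' : ℕ → E) (k n : ℕ) :
    localTimeSplit k n (fun t => if t < k then ξ t else ξ' (t - k)) =
      localTimeZero (k + 1) ξ + localTimeZero (n - k) ξ' - 1 := by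
  have hfirst : (localTimeZero (k + 1) fun t => if t < k then ξ t else ξ' (t - k)) =
      localTimeZero (k + 1) ξ :=
    dependsOn_localTimeZero _ fun t ht => by
      simp only [Set.mem_Iio, Nat.add_sub_cancel] at ht
      rw [if_pos ht]
  simp only [localTimeSplit, hfirst, add_lt_iff_neg_left, Nat.not_lt_zero, if_false,
    Nat.add_sub_cancel_left]

end LocalTime

namespace ProbabilityTheory

variable {Ω ι κ E β : Type*} [MeasurableSpace Ω] {μ : Measure Ω} [MeasurableSpace E]
  {W : ι → Ω → E}

theorem iIndepFun.identDistrib_pi_comp [Fintype κ] (hW : ∀ i, Measurable (W i))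
    (h : iIndepFun W μ) {e f : κ → ι} (he : e.Injective) (hf : f.Injective)
    (hid : ∀ j, IdentDistrib (W (e j)) (W (f j)) μ μ) :
    IdentDistrib (fun ω j => W (e j) ω) (fun ω j => W (f j) ω) μ μ where
  aemeasurable_fst := (measurable_pi_lambda _ fun j => hW (e j)).aemeasurable
  aemeasurable_snd := (measurable_pi_lambda _ fun j => hW (f j)).aemeasurable
  map_eq := by
    rw [(h.precomp he).map_fun_eq_pi_map fun j => (hW (e j)).aemeasurable,
      (h.precomp hf).map_fun_eq_pi_map fun j => (hW (f j)).aemeasurable]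
    exact congrArg Measure.pi (funext fun j => (hid j).map_eq)

theorem iIndepFun.indepFun_pi_comp {κ' : Type*} [Fintype κ] [Fintype κ']
    (hW : ∀ i, Measurable (W i)) (h : iIndepFun W μ) {e : κ → ι} {f : κ' → ι}
    (hef : ∀ j j', e j ≠ f j') :
    IndepFun (fun ω j => W (e j) ω) (fun ω j' => W (f j') ω) μ := by
  classical
  have hST : Disjoint (univ.image e) (univ.image f) := by
    simpa [disjoint_left] using fun j j' => (hef j j').symm
  exact (h.indepFun_finset _ _ hST hW).comp
    (measurable_pi_lambda _ fun j => measurable_pi_apply ⟨e j, mem_image_of_mem e (mem_univ j)⟩)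
    (measurable_pi_lambda _ fun j => measurable_pi_apply ⟨f j, mem_image_of_mem f (mem_univ j)⟩)

variable [Countable E] [MeasurableSingletonClass E] [MeasurableSpace β] [Nonempty β]

theorem iIndepFun.identDistrib_comp_of_dependsOn (hW : ∀ i, Measurable (W i))
    (h : iIndepFun W μ) {s : Set κ} [Finite s] {Φ : (κ → E) → β} (hΦ : DependsOn Φ s)
    {e f : κ → ι} (he : s.InjOn e) (hf : s.InjOn f)
    (hid : ∀ j ∈ s, IdentDistrib (W (e j)) (W (f j)) μ μ) :
    IdentDistrib (fun ω => Φ fun j => W (e j) ω) (fun ω => Φ fun j => W (f j) ω) μ μ := by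
  have := Fintype.ofFinite s
  obtain ⟨g, rfl⟩ := dependsOn_iff_exists_comp.1 hΦ
  exact (h.identDistrib_pi_comp hW he.injective hf.injective fun j => hid j j.2).comp
    (measurable_of_countable g)

theorem iIndepFun.indepFun_comp_of_dependsOn_s7 {β' : Type*} [MeasurableSpace β'] [Nonempty β']
    (hW : ∀ i, Measurable (W i)) (h : iIndepFun W μ) {s t : Set κ} [Finite s] [Finite t]
    {Φ : (κ → E) → β} {Ψ : (κ → E) → β'} (hΦ : DependsOn Φ s) (hΨ : DependsOn Ψ t)
    {e f : κ → ι} (hef : ∀ j ∈ s, ∀ j' ∈ t, e j ≠ f j') :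
    IndepFun (fun ω => Φ fun j => W (e j) ω) (fun ω => Ψ fun j => W (f j) ω) μ := by
  have := Fintype.ofFinite s
  have := Fintype.ofFinite t
  obtain ⟨g, rfl⟩ := dependsOn_iff_exists_comp.1 hΦ
  obtain ⟨g', rfl⟩ := dependsOn_iff_exists_comp.1 hΨ
  exact (h.indepFun_pi_comp hW (e := fun j : s => e j) (f := fun j : t => f j)
    fun j j' => hef j j.2 j' j'.2).comp
    (measurable_of_countable g) (measurable_of_countable g')

end ProbabilityTheory

section TwoWalks

variable {Ω ι E : Type*} [MeasurableSpace Ω] {μ : Measure Ω} [AddCommGroup E] [DecidableEq E]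
  [MeasurableSpace E] [Countable E] [MeasurableSingletonClass E] {W : ι → Ω → E} {a a' : ℕ → ι}

theorem identDistrib_card_visits_at_time (hW : ∀ i, Measurable (W i))
    (hindep : iIndepFun W μ) (hident : ∀ i j, IdentDistrib (W i) (W j) μ μ)
    (ha : a.Injective) (ha' : a'.Injective) (haa' : ∀ s t, a s ≠ a' t) {k n : ℕ} (hk : k ≤ n) :
    IdentDistrib
      (fun ω => #{j ∈ range n | ∑ t ∈ range j, W (a t) ω = ∑ t ∈ range k, W (a t) ω})
      (fun ω => localTimeZero (k + 1) (fun t => W (a t) ω) +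
        localTimeZero (n - k) (fun t => W (a' t) ω) - 1) μ μ := by
  have hreflect : Function.Injective fun t => if t < k then k - 1 - t else t := by
    intro s t h
    dsimp only at h
    split_ifs at h <;> omega
  have happend : Function.Injective fun t => if t < k then a t else a' (t - k) := by
    intro s t h
    dsimp only at h
    split_ifs at h with hs ht ht
    exacts [ha h, (haa' _ _ h).elim, (haa' _ _ h.symm).elim, by have := ha' h; omega]
  have := hindep.identDistrib_comp_of_dependsOn hW (dependsOn_localTimeSplit hk)
    (ha.comp hreflect).injOn happend.injOn fun _ _ => hident _ _
  have hback (ω) : localTimeSplit k n (fun t => W (a (if t < k then k - 1 - t else t)) ω) =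
      #{j ∈ range n | ∑ t ∈ range j, W (a t) ω = ∑ t ∈ range k, W (a t) ω} :=
    localTimeSplit_reflect (fun t => W (a t) ω) hk
  have hsplice (ω) : localTimeSplit k n (fun t => W (if t < k then a t else a' (t - k)) ω) =
      localTimeZero (k + 1) (fun t => W (a t) ω) +
        localTimeZero (n - k) (fun t => W (a' t) ω) - 1 := by
    simp only [apply_ite (W · ω)]
    exact localTimeSplit_append (fun t => W (a t) ω) (fun t => W (a' t) ω) k n
  simpa only [Function.comp_apply, hback, hsplice] using this

theorem identDistrib_localTimeZero_of_injective (hW : ∀ i, Measurable (W i))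
    (hindep : iIndepFun W μ) (hident : ∀ i j, IdentDistrib (W i) (W j) μ μ)
    (ha : a.Injective) (ha' : a'.Injective) (m : ℕ) :
    IdentDistrib (fun ω => localTimeZero m fun t => W (a t) ω)
      (fun ω => localTimeZero m fun t => W (a' t) ω) μ μ :=
  hindep.identDistrib_comp_of_dependsOn hW (dependsOn_localTimeZero m) ha.injOn ha'.injOn
    fun _ _ => hident _ _

theorem indepFun_localTimeZero_of_disjoint (hW : ∀ i, Measurable (W i))
    (hindep : iIndepFun W μ) (haa' : ∀ s t, a s ≠ a' t) (m m' : ℕ) :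
    IndepFun (fun ω => localTimeZero m fun t => W (a t) ω)
      (fun ω => localTimeZero m' fun t => W (a' t) ω) μ :=
  hindep.indepFun_comp_of_dependsOn_s7 hW (dependsOn_localTimeZero m) (dependsOn_localTimeZero m')
    fun s _ t _ => haa' s t

end TwoWalks

section ExponentialMoments

variable {Ω : Type*} [MeasurableSpace Ω] {μ : Measure Ω} {a : ℝ}

theorem integrable_exp_mul_of_le [IsFiniteMeasure μ] {U : Ω → ℕ} (hU : AEMeasurable U μ)
    {C : ℕ} (hC : ∀ ω, U ω ≤ C) (ha : 0 ≤ a) :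
    Integrable (fun ω => Real.exp (a * U ω)) μ := by
  have hexp : Measurable fun x : ℕ => Real.exp (a * x) := measurable_of_countable _
  refine .of_bound (hexp.comp_aemeasurable hU).aestronglyMeasurable (Real.exp (a * C))
    (ae_of_all _ fun ω => ?_)
  rw [Real.norm_of_nonneg (Real.exp_pos _).le]
  gcongr
  exact hC ω

theorem integral_exp_mul_le_sq {U V T Y : Ω → ℕ} (ha : 0 ≤ a) (hY : IdentDistrib Y T μ μ)
    (hT : ∀ ω, T ω ≤ U ω + V ω) (hUV : IndepFun U V μ) (hVU : IdentDistrib V U μ μ)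
    (hU : Integrable (fun ω => Real.exp (a * U ω)) μ) :
    ∫ ω, Real.exp (a * Y ω) ∂μ ≤ (∫ ω, Real.exp (a * U ω) ∂μ) ^ 2 := by
  have hexp : Measurable fun x : ℕ => Real.exp (a * x) := measurable_of_countable _
  have hV : Integrable (fun ω => Real.exp (a * V ω)) μ :=
    (hVU.comp hexp).integrable_iff.2 hU
  have hUV' := hUV.comp hexp hexp
  have hVU' : ∫ ω, Real.exp (a * V ω) ∂μ = ∫ ω, Real.exp (a * U ω) ∂μ :=
    (hVU.comp hexp).integral_eq
  calc ∫ ω, Real.exp (a * Y ω) ∂μ = ∫ ω, Real.exp (a * T ω) ∂μ := (hY.comp hexp).integral_eq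
    _ ≤ ∫ ω, Real.exp (a * U ω) * Real.exp (a * V ω) ∂μ := by
      refine integral_mono_of_nonneg (ae_of_all _ fun ω => (Real.exp_pos _).le)
        (hUV'.integrable_mul hU hV) (ae_of_all _ fun ω => ?_)
      dsimp only
      rw [← Real.exp_add, ← mul_add]
      gcongr
      exact_mod_cast hT ω
    _ = (∫ ω, Real.exp (a * U ω) ∂μ) * ∫ ω, Real.exp (a * V ω) ∂μ :=
      hUV'.integral_mul_eq_mul_integral hU.aestronglyMeasurable hV.aestronglyMeasurable
    _ = (∫ ω, Real.exp (a * U ω) ∂μ) ^ 2 := by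
      rw [sq, hVU']

end ExponentialMoments

theorem local_time_at_walk_identity_general
    {Ω : Type*} [MeasurableSpace Ω] (μ : Measure Ω) [IsProbabilityMeasure μ]
    (d : ℕ) (X X' : ℕ → Ω → (Fin d → ℤ))
    (hmeas : ∀ i : ℕ ⊕ ℕ, Measurable (Sum.elim X X' i))
    (hindep : iIndepFun (Sum.elim X X') μ)
    (hident : ∀ i j : ℕ ⊕ ℕ, IdentDistrib (Sum.elim X X' i) (Sum.elim X X' j) μ μ)
    (S S' : ℕ → Ω → (Fin d → ℤ))
    (hS : ∀ n ω, S n ω = ∑ j ∈ Finset.range n, X (j + 1) ω)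
    (hS' : ∀ n ω, S' n ω = ∑ j ∈ Finset.range n, X' (j + 1) ω)
    (N N' : ℕ → (Fin d → ℤ) → Ω → ℕ)
    (hN : ∀ n x ω, N n x ω = ((Finset.range n).filter (fun j => S j ω = x)).card)
    (hN' : ∀ n x ω, N' n x ω = ((Finset.range n).filter (fun j => S' j ω = x)).card)
    (n k : ℕ) (hk : k ≤ n - 1) :
    IdentDistrib (fun ω => N n (S k ω) ω)
        (fun ω => N (k + 1) 0 ω + N' (n - k) 0 ω - 1) μ μ ∧
      ∀ c : ℝ, 0 < c →
        ∫ ω, Real.exp (c * (N n (S k ω) ω : ℝ) / Real.log n) ∂μ ≤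
          (∫ ω, Real.exp (c * (N n 0 ω : ℝ) / Real.log n) ∂μ) ^ (2 : ℕ) := by
  have hN0 (m ω) : N m 0 ω = localTimeZero m fun t => X (t + 1) ω := by
    simp only [hN, hS, localTimeZero]
  have hN0' (m ω) : N' m 0 ω = localTimeZero m fun t => X' (t + 1) ω := by
    simp only [hN', hS', localTimeZero]
  have hNS (ω) : N n (S k ω) ω =
      #{j ∈ range n | ∑ t ∈ range j, X (t + 1) ω = ∑ t ∈ range k, X (t + 1) ω} := by
    simp only [hN, hS]
  have ha : Function.Injective fun t => (Sum.inl (t + 1) : ℕ ⊕ ℕ) := fun _ _ h => by simpa using h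
  have ha' : Function.Injective fun t => (Sum.inr (t + 1) : ℕ ⊕ ℕ) := fun _ _ h => by simpa using h
  have hlaw : IdentDistrib (fun ω => N n (S k ω) ω)
      (fun ω => N (k + 1) 0 ω + N' (n - k) 0 ω - 1) μ μ := by
    simp only [hNS, hN0, hN0']
    exact identDistrib_card_visits_at_time hmeas hindep hident ha ha'
      (fun _ _ => Sum.inl_ne_inr) (by omega)
  have hlaw0 : IdentDistrib (fun ω => N' n 0 ω) (fun ω => N n 0 ω) μ μ := by
    simp only [hN0, hN0']
    exact identDistrib_localTimeZero_of_injective hmeas hindep hident ha' ha n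
  have hindep0 : IndepFun (fun ω => N n 0 ω) (fun ω => N' n 0 ω) μ := by
    simp only [hN0, hN0']
    exact indepFun_localTimeZero_of_disjoint hmeas hindep (fun _ _ => Sum.inl_ne_inr) n n
  refine ⟨hlaw, fun c hc => ?_⟩
  have hc' : 0 ≤ c / Real.log n := div_nonneg hc.le (Real.log_natCast_nonneg n)
  simp only [mul_div_right_comm c]
  refine integral_exp_mul_le_sq hc' hlaw (fun ω => ?_) hindep0 hlaw0
    (integrable_exp_mul_of_le hlaw0.aemeasurable_snd (C := n) (fun ω => ?_) hc')
  · simpa only [hN0, hN0'] using localTimeZero_add_localTimeZero_sub_one_le _ _ (by omega)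
  · exact (hN0 n ω).trans_le (localTimeZero_le _ _)

/-- For a random walk with i.i.d. increments `X` and an independent copy with
increments `X'`, the local time `N_n(S_k)` has the same distribution as
`N_{k+1}(0) + N'_{n-k}(0) - 1`, and consequently
`E[exp(c N_n(S_k)/log n)] ≤ E[exp(c N_n(0)/log n)]²` for every `c > 0` and
`0 ≤ k ≤ n - 1`. -/
theorem local_time_at_walk_identity
    {Ω : Type*} [MeasurableSpace Ω] (μ : Measure Ω) [IsProbabilityMeasure μ]
    (d : ℕ) (X X' : ℕ → Ω → (Fin d → ℤ))
    (hmeas : ∀ i : ℕ ⊕ ℕ, Measurable (Sum.elim X X' i))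
    (hindep : iIndepFun (Sum.elim X X') μ)
    (hident : ∀ i j : ℕ ⊕ ℕ, IdentDistrib (Sum.elim X X' i) (Sum.elim X X' j) μ μ)
    (S S' : ℕ → Ω → (Fin d → ℤ))
    (hS : ∀ n ω, S n ω = ∑ j ∈ Finset.range n, X (j + 1) ω)
    (hS' : ∀ n ω, S' n ω = ∑ j ∈ Finset.range n, X' (j + 1) ω)
    (N N' : ℕ → (Fin d → ℤ) → Ω → ℕ)
    (hN : ∀ n x ω, N n x ω = ((Finset.range n).filter (fun j => S j ω = x)).card)
    (hN' : ∀ n x ω, N' n x ω = ((Finset.range n).filter (fun j => S' j ω = x)).card)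
    (n k : ℕ) (hn : 1 ≤ n) (hk : k ≤ n - 1) :
    IdentDistrib (fun ω => N n (S k ω) ω)
        (fun ω => N (k + 1) 0 ω + N' (n - k) 0 ω - 1) μ μ ∧
      ∀ c : ℝ, 0 < c →
        ∫ ω, Real.exp (c * (N n (S k ω) ω : ℝ) / Real.log n) ∂μ ≤
          (∫ ω, Real.exp (c * (N n 0 ω : ℝ) / Real.log n) ∂μ) ^ (2 : ℕ) :=
  local_time_at_walk_identity_general μ d X X' hmeas hindep hident S S' hS hS' N N' hN hN' n k hk
end
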